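/- For any polynomial map p : ℝ^d → ℝ^m with p(0) = 0 given by polynomials p₁,…,p_m, and for every letter i ∈ {1,…,m}, one has M_p(i) = φ_d(p_i), where i denotes the corresponding single-letter word in T(ℝ^m). -/

import Mathlib

/-!
Let `T_j^-` delete a final letter `j` (and kill words not ending in `j`). It is a derivation of
`⧢` sending the letter `i` to `δ_ij e`, so on shuffle monomials it acts as `∂/∂x_j`:
`T_j^- ∘ φ_d = φ_d ∘ ∂_j`. Every `x ∈ T(ℝ^d)` equals `x(e) e + Σ_j (T_j^- x)∘j`, and the
coefficient of `e` in `φ_d(q)` is `q(0)`. For `q = p_i` with `p_i(0) = 0` this reads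
`φ_d(p_i) = Σ_j φ_d(∂_j p_i)∘j`, which is `M_p(i)` since `M_p(e) = e` is the unit of `⧢`.
-/

noncomputable section

open MeasureTheory

/-- Words in the alphabet `{1,…,d}`. -/
abbrev Word (d : ℕ) := List (Fin d)

/-- `T(ℝ^d)`: the real vector space with basis the words in `{1,…,d}`. -/
abbrev Tens (d : ℕ) := Word d →₀ ℝ

namespace SigPaper

variable {d m s : ℕ}

/-- The basis word `w` as an element of `T(ℝ^d)`. -/
def wordT (w : Word d) : Tens d := Finsupp.single w 1

/-- The shuffle product of two words. -/
def shuffleWord : Word d → Word d → Tens d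
  | [], v => Finsupp.single v 1
  | u, [] => Finsupp.single u 1
  | a :: u, b :: v =>
      Finsupp.mapDomain (fun w => a :: w) (shuffleWord u (b :: v)) +
      Finsupp.mapDomain (fun w => b :: w) (shuffleWord (a :: u) v)
  termination_by u v => u.length + v.length
  decreasing_by all_goals simp +arith +decide

/-- The shuffle product `⧢` on `T(ℝ^d)`, the bilinear extension of the shuffle of words. -/
def shuffle (x y : Tens d) : Tens d :=
  x.sum fun u a => y.sum fun v b => (a * b) • shuffleWord u v

/-- The operator appending the letter `i` at the end of every word (`T_i^+`). -/
def appendLetter (i : Fin d) (x : Tens d) : Tens d :=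
  Finsupp.mapDomain (fun w => w ++ [i]) x

/-- The right half-shuffle of two words: `w ≻ (v∘i) = (w ⧢ v)∘i` (zero if the right word
is empty). -/
def halfShuffleWord (u v : Word d) : Tens d :=
  match v.getLast? with
  | none => 0
  | some i => appendLetter i (shuffleWord u v.dropLast)

/-- The right half-shuffle `≻`, extended bilinearly. -/
def halfShuffle (x y : Tens d) : Tens d :=
  x.sum fun u a => y.sum fun v b => (a * b) • halfShuffleWord u v

/-- The letter-appending operator `T_i^+`. -/
def Tplus (i : Fin d) : Tens d → Tens d := appendLetter i

/-- `T_i^-` on a word: removes the last letter if it equals `i`, otherwise `0`. -/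
def TminusWord (i : Fin d) (w : Word d) : Tens d :=
  match w.getLast? with
  | none => 0
  | some j => if j = i then Finsupp.single w.dropLast 1 else 0

/-- The letter-removing operator `T_i^-`. -/
def Tminus (i : Fin d) (x : Tens d) : Tens d := x.sum fun w a => a • TminusWord i w

/-- The single-letter word `i` in `T(ℝ^d)`. -/
def letterT (i : Fin d) : Tens d := Finsupp.single [i] 1

/-- Shuffle powers `x^{⧢ n}`. -/
def shufflePow (x : Tens d) : ℕ → Tens d
  | 0 => Finsupp.single [] 1
  | n + 1 => shuffle (shufflePow x n) x

/-- Shuffle product of a list of elements. -/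
def shuffleList : List (Tens d) → Tens d
  | [] => Finsupp.single [] 1
  | x :: xs => shuffle x (shuffleList xs)

/-- Image of the monomial `x^t` under `φ_d`: the shuffle product of its letters. -/
def phiMon (t : Fin d →₀ ℕ) : Tens d :=
  shuffleList ((List.finRange d).map fun i => shufflePow (letterT i) (t i))

/-- The embedding `φ_d : ℝ[x₁,…,x_d] → (T(ℝ^d), ⧢)` sending the monomial
`x_{i₁}⋯x_{i_l}` to `i₁ ⧢ ⋯ ⧢ i_l`. -/
def phi (f : MvPolynomial (Fin d) ℝ) : Tens d :=
  f.support.sum fun t => f.coeff t • phiMon t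

/-- A polynomial map `p : ℝ^d → ℝ^m`, given by `m` polynomials in `d` variables. -/
abbrev PolyMap (d m : ℕ) := Fin m → MvPolynomial (Fin d) ℝ

/-- `k_p^{ij} = φ_d(∂p_i/∂x_j) ∈ T(ℝ^d)`. -/
def kP (p : PolyMap d m) (i : Fin m) (j : Fin d) : Tens d :=
  phi (MvPolynomial.pderiv j (p i))

/-- Auxiliary: `M_p` on reversed words, so that `M_p(e) = e` and
`M_p(w∘i) = Σ_j (M_p(w) ⧢ k_p^{ij})∘j`. -/
def MpRev (p : PolyMap d m) : List (Fin m) → Tens d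
  | [] => Finsupp.single [] 1
  | i :: w => ∑ j : Fin d, appendLetter j (shuffle (MpRev p w) (kP p i j))

/-- `M_p` on a word. -/
def MpWord (p : PolyMap d m) (w : Word m) : Tens d := MpRev p w.reverse

/-- The linear map `M_p : T(ℝ^m) → T(ℝ^d)`. -/
def Mp (p : PolyMap d m) (x : Tens m) : Tens d := x.sum fun w a => a • MpWord p w

/-- `X : [0,L] → ℝ^d` is piecewise continuously differentiable: there is a partition
`0 = t₀ ≤ t₁ ≤ ⋯ ≤ t_n = L` such that `X` is `C¹` on each subinterval. -/
def PiecewiseC1 (X : ℝ → Fin d → ℝ) (L : ℝ) : Prop :=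
  ∃ (n : ℕ) (t : Fin (n + 1) → ℝ), Monotone t ∧ t 0 = 0 ∧ t (Fin.last n) = L ∧
    ∀ k : Fin n, ContDiffOn ℝ 1 X (Set.Icc (t k.castSucc) (t k.succ))

/-- Iterated-integral signature coefficients, on reversed words:
`⟨σ(X|_{[0,t]}), w∘i⟩ = ∫_0^t ⟨σ(X|_{[0,r]}), w⟩ Ẋ^i_r dr`. -/
def sigRev (X : ℝ → Fin d → ℝ) : List (Fin d) → ℝ → ℝ
  | [], _ => 1
  | i :: w, t => ∫ r in (0:ℝ)..t, sigRev X w r * deriv (fun u => X u i) r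

/-- `⟨σ(X|_{[0,L]}), w⟩`, the signature coefficient of the word `w`. -/
def sigWord (X : ℝ → Fin d → ℝ) (L : ℝ) (w : Word d) : ℝ := sigRev X w.reverse L

/-- The pairing `⟨σ(X|_{[0,L]}), x⟩` for `x ∈ T(ℝ^d)`. -/
def sigT (X : ℝ → Fin d → ℝ) (L : ℝ) (x : Tens d) : ℝ :=
  x.sum fun w a => a * sigWord X L w

/-- The transformed path `p(X) : t ↦ p(X(t))`. -/
def pPath (p : PolyMap d m) (X : ℝ → Fin d → ℝ) : ℝ → Fin m → ℝ :=
  fun t i => MvPolynomial.eval (X t) (p i)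

/-- The translated polynomial map `p̃(y) = p(y + x₀) − p(x₀)`, satisfying `p̃(0) = 0`. -/
def ptilde (p : PolyMap d m) (x0 : Fin d → ℝ) : PolyMap d m := fun i =>
  MvPolynomial.aeval (fun j => MvPolynomial.X j + MvPolynomial.C (x0 j)) (p i) -
    MvPolynomial.C (MvPolynomial.eval x0 (p i))

/-- The pairing `⟨exp_∘(L·𝟙), x⟩` for `x ∈ T(ℝ¹)`: the coefficient of the word of
length `n` in `exp_∘(L·𝟙)` is `Lⁿ/n!`. -/
def expPair (L : ℝ) (x : Tens 1) : ℝ :=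
  x.sum fun w a => a * (L ^ w.length / (w.length.factorial : ℝ))

/-- The pairing `⟨σ(X) ∘ σ(Y), x⟩` of the concatenation product of two signatures with
`x ∈ T(ℝ^d)`: on a word `w` it is `Σ_{u∘v = w} ⟨σ(X), u⟩·⟨σ(Y), v⟩`. -/
def concatPair (X Y : ℝ → Fin d → ℝ) (L : ℝ) (x : Tens d) : ℝ :=
  x.sum fun w a =>
    a * ∑ k ∈ Finset.range (w.length + 1), sigWord X L (w.take k) * sigWord Y L (w.drop k)

theorem shuffleWord_nil_left (v : Word d) : shuffleWord [] v = Finsupp.single v 1 := by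
  simp [shuffleWord]

theorem shuffleWord_nil_right (u : Word d) : shuffleWord u [] = Finsupp.single u 1 := by
  cases u <;> simp [shuffleWord]

theorem shuffleWord_cons_cons (a b : Fin d) (u v : Word d) :
    shuffleWord (a :: u) (b :: v) =
      Finsupp.mapDomain (a :: ·) (shuffleWord u (b :: v)) +
        Finsupp.mapDomain (b :: ·) (shuffleWord (a :: u) v) := by
  rw [shuffleWord]

theorem shuffleWord_apply_nil (u v : Word d) :
    shuffleWord u v [] = if u = [] ∧ v = [] then 1 else 0 := by
  match u, v with
  | [], v => simp [shuffleWord_nil_left, Finsupp.single_apply]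
  | a :: u, [] => simp [shuffleWord_nil_right]
  | a :: u, b :: v => simp [shuffleWord_cons_cons, Finsupp.mapDomain_of_notMem_range]

theorem appendLetter_zero (i : Fin d) : appendLetter i 0 = 0 :=
  Finsupp.mapDomain_zero

theorem appendLetter_add (i : Fin d) (x y : Tens d) :
    appendLetter i (x + y) = appendLetter i x + appendLetter i y :=
  Finsupp.mapDomain_add

theorem appendLetter_single (i : Fin d) (w : Word d) (a : ℝ) :
    appendLetter i (Finsupp.single w a) = Finsupp.single (w ++ [i]) a :=
  Finsupp.mapDomain_single

theorem mapDomain_cons_appendLetter (a b : Fin d) (x : Tens d) :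
    Finsupp.mapDomain (a :: ·) (appendLetter b x) =
      appendLetter b (Finsupp.mapDomain (a :: ·) x) := by
  simp only [appendLetter, ← Finsupp.mapDomain_comp]
  rfl

/-- The recursion on last letters by which the paper defines `⧢`; `shuffleWord` recurses on
first letters. -/
theorem shuffleWord_append_singleton : ∀ (u v : Word d) (a b : Fin d),
    shuffleWord (u ++ [a]) (v ++ [b]) =
      appendLetter a (shuffleWord u (v ++ [b])) + appendLetter b (shuffleWord (u ++ [a]) v)
  | [], [], a, b => by
    simp [shuffleWord, appendLetter_single, add_comm]
  | [], c :: v, a, b => by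
    have ih := shuffleWord_append_singleton [] v a b
    simp only [List.nil_append] at ih ⊢
    simp only [List.cons_append, shuffleWord_cons_cons, ih, shuffleWord_nil_left,
      Finsupp.mapDomain_add, Finsupp.mapDomain_single, appendLetter_add, appendLetter_single,
      mapDomain_cons_appendLetter]
    abel
  | c :: u, [], a, b => by
    have ih := shuffleWord_append_singleton u [] a b
    simp only [List.nil_append] at ih ⊢
    simp only [List.cons_append, shuffleWord_cons_cons, ih, shuffleWord_nil_right,
      Finsupp.mapDomain_add, Finsupp.mapDomain_single, appendLetter_add, appendLetter_single,
      mapDomain_cons_appendLetter]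
    abel
  | c :: u, e :: v, a, b => by
    have ih₁ := shuffleWord_append_singleton u (e :: v) a b
    have ih₂ := shuffleWord_append_singleton (c :: u) v a b
    simp only [List.cons_append] at ih₁ ih₂ ⊢
    simp only [shuffleWord_cons_cons, ih₁, ih₂, Finsupp.mapDomain_add,
      mapDomain_cons_appendLetter, appendLetter_add]
    abel
  termination_by u v => u.length + v.length

def shuffleₗ : Tens d →ₗ[ℝ] Tens d →ₗ[ℝ] Tens d :=
  Finsupp.linearCombination ℝ fun u => Finsupp.linearCombination ℝ (shuffleWord u)

theorem shuffle_eq_shuffleₗ (x y : Tens d) : shuffle x y = shuffleₗ x y := by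
  simp [shuffle, shuffleₗ, Finsupp.linearCombination_apply, LinearMap.finsupp_sum_apply,
    Finsupp.smul_sum, smul_smul]

theorem shuffle_zero_left (y : Tens d) : shuffle 0 y = 0 := by
  simp [shuffle_eq_shuffleₗ]

theorem shuffle_zero_right (x : Tens d) : shuffle x 0 = 0 := by
  simp [shuffle_eq_shuffleₗ]

theorem shuffle_smul_left (c : ℝ) (x y : Tens d) : shuffle (c • x) y = c • shuffle x y := by
  simp [shuffle_eq_shuffleₗ]

theorem shuffle_smul_right (c : ℝ) (x y : Tens d) : shuffle x (c • y) = c • shuffle x y := by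
  simp [shuffle_eq_shuffleₗ]

theorem shuffle_single_single (u v : Word d) (a b : ℝ) :
    shuffle (Finsupp.single u a) (Finsupp.single v b) = (a * b) • shuffleWord u v := by
  simp [shuffle_eq_shuffleₗ, shuffleₗ, smul_smul]

theorem shuffle_single_nil_left (x : Tens d) : shuffle (Finsupp.single [] 1) x = x := by
  simp [shuffle_eq_shuffleₗ, shuffleₗ, shuffleWord_nil_left, Finsupp.linearCombination_apply]

theorem shuffle_single_nil_right (x : Tens d) : shuffle x (Finsupp.single [] 1) = x := by
  simp [shuffle_eq_shuffleₗ, shuffleₗ, shuffleWord_nil_right, Finsupp.linearCombination_apply]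

theorem shuffle_apply_nil (x y : Tens d) : shuffle x y [] = x [] * y [] := by
  rw [shuffle_eq_shuffleₗ]
  induction x using Finsupp.induction_linear with
  | zero => simp
  | add x x' hx hx' => simp [hx, hx', add_mul]
  | single u a =>
    induction y using Finsupp.induction_linear with
    | zero => simp
    | add y y' hy hy' => simp [hy, hy', mul_add]
    | single v b =>
      rw [← shuffle_eq_shuffleₗ, shuffle_single_single]
      by_cases hu : u = [] <;> by_cases hv : v = [] <;>
        simp [shuffleWord_apply_nil, eq_comm, hu, hv]

theorem TminusWord_nil (j : Fin d) : TminusWord j [] = 0 := rfl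

theorem TminusWord_append_singleton (j c : Fin d) (w : Word d) :
    TminusWord j (w ++ [c]) = if c = j then Finsupp.single w 1 else 0 := by
  simp [TminusWord]

theorem Tminus_eq_linearCombination (j : Fin d) (x : Tens d) :
    Tminus j x = Finsupp.linearCombination ℝ (TminusWord j) x := rfl

theorem Tminus_single (j : Fin d) (w : Word d) (a : ℝ) :
    Tminus j (Finsupp.single w a) = a • TminusWord j w := by
  simp [Tminus_eq_linearCombination]

theorem Tminus_add (j : Fin d) (x y : Tens d) : Tminus j (x + y) = Tminus j x + Tminus j y :=
  map_add (Finsupp.linearCombination ℝ (TminusWord j)) x y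

theorem Tminus_smul (j : Fin d) (c : ℝ) (x : Tens d) : Tminus j (c • x) = c • Tminus j x :=
  map_smul (Finsupp.linearCombination ℝ (TminusWord j)) c x

theorem Tminus_appendLetter (j c : Fin d) (x : Tens d) :
    Tminus j (appendLetter c x) = if c = j then x else 0 := by
  induction x using Finsupp.induction_linear with
  | zero => simp [appendLetter_zero, Tminus_eq_linearCombination]
  | add x y hx hy =>
    rw [appendLetter_add, Tminus_add, hx, hy]
    split_ifs <;> simp
  | single w a =>
    rw [appendLetter_single, Tminus_single, TminusWord_append_singleton]
    split_ifs <;> simp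

theorem smul_single_nil_add_sum_appendLetter_Tminus (x : Tens d) :
    x [] • Finsupp.single [] 1 + ∑ j, appendLetter j (Tminus j x) = x := by
  induction x using Finsupp.induction_linear with
  | zero => simp [Tminus_eq_linearCombination, appendLetter_zero]
  | add x y hx hy =>
    conv_rhs => rw [← hx, ← hy]
    simp only [Finsupp.add_apply, add_smul, Tminus_add, appendLetter_add, Finset.sum_add_distrib]
    abel
  | single w a =>
    rcases w.eq_nil_or_concat with rfl | ⟨w, c, rfl⟩
    · simp [Tminus_single, TminusWord_nil, appendLetter_zero]
    · simp only [List.concat_eq_append, Tminus_single, TminusWord_append_singleton, smul_ite]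
      simp [apply_ite, appendLetter_single, appendLetter_zero]

theorem Tminus_shuffleWord (j : Fin d) (u v : Word d) :
    Tminus j (shuffleWord u v) =
      shuffle (TminusWord j u) (wordT v) + shuffle (wordT u) (TminusWord j v) := by
  rcases u.eq_nil_or_concat with rfl | ⟨u, a, rfl⟩ <;>
    rcases v.eq_nil_or_concat with rfl | ⟨v, b, rfl⟩
  all_goals
    simp only [List.concat_eq_append, shuffleWord_nil_left, shuffleWord_nil_right,
      shuffleWord_append_singleton, Tminus_single, Tminus_appendLetter, Tminus_add,
      TminusWord_nil, TminusWord_append_singleton, wordT]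
    try split_ifs
    all_goals simp [shuffle_single_single, shuffle_zero_left, shuffle_zero_right,
      shuffle_single_nil_right, shuffleWord_nil_left]

theorem Tminus_shuffle (j : Fin d) (x y : Tens d) :
    Tminus j (shuffle x y) = shuffle (Tminus j x) y + shuffle x (Tminus j y) := by
  simp only [shuffle_eq_shuffleₗ, Tminus_eq_linearCombination]
  induction x using Finsupp.induction_linear with
  | zero => simp
  | add x x' hx hx' => simp only [map_add, LinearMap.add_apply, hx, hx']; abel
  | single u a =>
    induction y using Finsupp.induction_linear with
    | zero => simp
    | add y y' hy hy' => simp only [map_add, hy, hy']; abel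
    | single v b =>
      simp only [← shuffle_eq_shuffleₗ, ← Tminus_eq_linearCombination, shuffle_single_single,
        Tminus_smul, Tminus_shuffleWord, Tminus_single]
      rw [← Finsupp.smul_single_one u a, ← Finsupp.smul_single_one v b]
      simp only [shuffle_smul_left, shuffle_smul_right, wordT]
      module

theorem Tminus_letterT (i j : Fin d) :
    Tminus j (letterT i) = if i = j then Finsupp.single [] 1 else 0 := by
  rw [letterT, Tminus_single, ← List.nil_append [i], TminusWord_append_singleton, one_smul]

theorem Tminus_shufflePow_letterT (i j : Fin d) (n : ℕ) :
    Tminus j (shufflePow (letterT i) n) =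
      if i = j then (n : ℝ) • shufflePow (letterT i) (n - 1) else 0 := by
  induction n with
  | zero => simp [shufflePow, Tminus_single, TminusWord_nil]
  | succ n ih =>
    rw [shufflePow, Tminus_shuffle, ih, Tminus_letterT]
    split_ifs
    · rw [shuffle_single_nil_right]
      cases n with
      | zero => simp [shufflePow, shuffle_zero_left]
      | succ n =>
        rw [shuffle_smul_left, Nat.add_sub_cancel, Nat.add_sub_cancel, ← shufflePow]
        push_cast
        module
    · simp [shuffle_zero_left, shuffle_zero_right]

theorem Tminus_shuffleList_map {ι : Type*} [DecidableEq ι] (j : Fin d) (F : ι → Tens d) (k : ι)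
    (c : ℝ) (g : Tens d) (hF : ∀ i ≠ k, Tminus j (F i) = 0) (hFk : Tminus j (F k) = c • g) :
    ∀ l : List ι, l.Nodup →
      Tminus j (shuffleList (l.map F)) =
        if k ∈ l then c • shuffleList (l.map (Function.update F k g)) else 0
  | [], _ => by simp [shuffleList, Tminus_single, TminusWord_nil]
  | a :: l, hal => by
    obtain ⟨ha, hl⟩ := List.nodup_cons.mp hal
    rw [List.map_cons, shuffleList, Tminus_shuffle, Tminus_shuffleList_map j F k c g hF hFk l hl]
    by_cases hak : a = k
    · subst hak
      have hmap : l.map (Function.update F a g) = l.map F :=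
        List.map_congr_left fun i hi => Function.update_of_ne (by rintro rfl; exact ha hi) _ _
      simp [hFk, ha, hmap, shuffleList, shuffle_smul_left, shuffle_zero_right]
    · by_cases hkl : k ∈ l
      · simp [hF a hak, hak, hkl, shuffleList, shuffle_smul_right, shuffle_zero_left, Ne.symm hak]
      · simp [hF a hak, hkl, Ne.symm hak, shuffle_zero_left, shuffle_zero_right]

theorem Tminus_phiMon (j : Fin d) (t : Fin d →₀ ℕ) :
    Tminus j (phiMon t) = (t j : ℝ) • phiMon (t - Finsupp.single j 1) := by
  have hupdate : Function.update (fun i => shufflePow (letterT i) (t i)) j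
      (shufflePow (letterT j) (t j - 1)) =
      fun i => shufflePow (letterT i) ((t - Finsupp.single j 1 : Fin d →₀ ℕ) i) := by
    funext i
    by_cases hij : i = j
    · subst hij; simp
    · simp [hij]
  rw [phiMon, Tminus_shuffleList_map j _ j (t j) (shufflePow (letterT j) (t j - 1))
    (fun i hij => by simp [Tminus_shufflePow_letterT, hij]) (by simp [Tminus_shufflePow_letterT])
    _ (List.nodup_finRange d), hupdate, if_pos (List.mem_finRange j), phiMon]

theorem phi_eq_constr (f : MvPolynomial (Fin d) ℝ) :
    phi f = (MvPolynomial.basisMonomials (Fin d) ℝ).constr ℝ phiMon f := by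
  rw [Module.Basis.constr_apply]
  rfl

theorem phi_add (f g : MvPolynomial (Fin d) ℝ) : phi (f + g) = phi f + phi g := by
  simp only [phi_eq_constr, map_add]

theorem phi_monomial (t : Fin d →₀ ℕ) (c : ℝ) :
    phi (MvPolynomial.monomial t c) = c • phiMon t := by
  have hbasis : MvPolynomial.monomial t c = c • MvPolynomial.basisMonomials (Fin d) ℝ t := by
    simp [MvPolynomial.smul_monomial]
  rw [phi_eq_constr, hbasis, map_smul, Module.Basis.constr_basis]

theorem Tminus_phi (j : Fin d) (q : MvPolynomial (Fin d) ℝ) :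
    Tminus j (phi q) = phi (MvPolynomial.pderiv j q) := by
  induction q using MvPolynomial.induction_on' with
  | monomial t c =>
    rw [MvPolynomial.pderiv_monomial, phi_monomial, phi_monomial, Tminus_smul, Tminus_phiMon,
      smul_smul]
  | add f g hf hg => rw [map_add, phi_add, phi_add, Tminus_add, hf, hg]

theorem shufflePow_letterT_apply_nil (i : Fin d) (n : ℕ) :
    shufflePow (letterT i) n [] = if n = 0 then 1 else 0 := by
  cases n with
  | zero => simp [shufflePow]
  | succ n => simp [shufflePow, shuffle_apply_nil, letterT]

theorem shuffleList_apply_nil (L : List (Tens d)) :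
    shuffleList L [] = (L.map (· [])).prod := by
  induction L with
  | nil => simp [shuffleList]
  | cons x L ih => simp [shuffleList, shuffle_apply_nil, ih]

theorem phiMon_apply_nil (t : Fin d →₀ ℕ) : phiMon t [] = if t = 0 then 1 else 0 := by
  rw [phiMon, shuffleList_apply_nil, List.map_map, ← Fin.prod_univ_def]
  simp [shufflePow_letterT_apply_nil, Finset.prod_boole, Finsupp.ext_iff]

theorem phi_apply_nil (q : MvPolynomial (Fin d) ℝ) : phi q [] = MvPolynomial.eval 0 q := by
  induction q using MvPolynomial.induction_on' with
  | monomial t c =>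
    simp [phi_monomial, phiMon_apply_nil, MvPolynomial.eval_zero,
      MvPolynomial.constantCoeff_monomial]
  | add f g hf hg => rw [phi_add, Finsupp.add_apply, hf, hg, map_add]

/-- For any polynomial map `p` with `p(0) = 0` and every letter `i`,
`M_p(i) = φ_d(p_i)`. -/
theorem Mp_letter (d m : ℕ) (p : PolyMap d m)
    (hp : ∀ i, MvPolynomial.eval (0 : Fin d → ℝ) (p i) = 0) :
    ∀ i : Fin m, Mp p (wordT [i]) = phi (p i) := by
  intro i
  calc Mp p (wordT [i]) = ∑ j, appendLetter j (phi (MvPolynomial.pderiv j (p i))) := by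
        simp [Mp, wordT, MpWord, MpRev, kP, shuffle_single_nil_left]
    _ = phi (p i) [] • Finsupp.single [] 1 + ∑ j, appendLetter j (Tminus j (phi (p i))) := by
        simp only [Tminus_phi, phi_apply_nil, hp, zero_smul, zero_add]
    _ = phi (p i) := smul_single_nil_add_sum_appendLetter_Tminus _

end SigPaper
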